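/- arXiv:2403.09960 — 6 statements merged into one kernel-verified Lean document; each statement's English description precedes it below -/
import Mathlib

section
/- Let λ > 0 and let h : (−1,∞) → ℝ be defined by h(u) := 2((1+u)log(1+u) − u)/u² for u ≠ 0. Then for every x > 0: Σ_{j ∈ ℕ, j ≥ λ+x} e^{−λ}λ^j/j! ≤ exp(−(x²/(2λ))·h(x/λ)), and for every 0 < x < λ: Σ_{j ∈ ℕ, j ≤ λ−x} e^{−λ}λ^j/j! ≤ exp(−(x²/(2λ))·h(−x/λ)). (Equivalently, a Poisson random variable N with mean λ satisfies P(N ≥ λ+x) ≤ exp(−λ((1+x/λ)log(1+x/λ) − x/λ)) and P(N ≤ λ−x) ≤ exp(−λ((1−x/λ)log(1−x/λ) + x/λ)).) -/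
open Real Nat

/- Chernoff's method. For `v > -1` the Poisson weights tilted by `(1 + v)^j` sum to `exp (λ v)`,
and on a set where `(1 + v)^(j - λ (1 + v)) ≥ 1` this bounds the mass by
`exp (-λ ((1 + v) log (1 + v) - v))`. Take `v = x/λ` for the upper tail and `v = -x/λ` for the
lower one; then `x² h(v) / (2λ) = λ ((1 + v) log (1 + v) - v)`. -/

theorem tsum_ite_poisson_le_exp (lam θ a : ℝ) (hlam : 0 ≤ lam) (S : ℕ → Prop) [DecidablePred S]
    (hS : ∀ j, S j → θ * a ≤ θ * j) :
    (∑' j : ℕ, if S j then exp (-lam) * lam ^ j / (j ! : ℝ) else 0) ≤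
      exp (lam * (exp θ - 1) - θ * a) := by
  have htilted : HasSum (fun j : ℕ => exp (-lam - θ * a) * (lam * exp θ) ^ j / (j ! : ℝ))
      (exp (lam * (exp θ - 1) - θ * a)) := by
    have := (NormedSpace.expSeries_div_hasSum_exp (lam * exp θ)).mul_left (exp (-lam - θ * a))
    rw [← Real.exp_eq_exp_ℝ, ← Real.exp_add] at this
    rw [show lam * (exp θ - 1) - θ * a = -lam - θ * a + lam * exp θ by ring]
    simpa only [mul_div_assoc] using this
  have hle : ∀ j : ℕ, (if S j then exp (-lam) * lam ^ j / (j ! : ℝ) else 0) ≤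
      exp (-lam - θ * a) * (lam * exp θ) ^ j / (j ! : ℝ) := by
    intro j
    split_ifs with hj
    · have hexp : exp (-lam) ≤ exp (-lam - θ * a) * exp (j * θ) := by
        rw [← Real.exp_add]
        exact exp_le_exp.2 (by linarith [hS j hj, mul_comm θ (j : ℝ)])
      calc exp (-lam) * lam ^ j / (j ! : ℝ)
          ≤ exp (-lam - θ * a) * exp (j * θ) * lam ^ j / (j ! : ℝ) := by gcongr
        _ = exp (-lam - θ * a) * (lam * exp θ) ^ j / (j ! : ℝ) := by
          rw [mul_pow, ← Real.exp_nat_mul]; ring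
    · positivity
  have hnonneg : ∀ j : ℕ, 0 ≤ (if S j then exp (-lam) * lam ^ j / (j ! : ℝ) else 0) := by
    intro j; split_ifs <;> positivity
  exact (Summable.tsum_le_tsum hle (htilted.summable.of_nonneg_of_le hnonneg hle)
    htilted.summable).trans_eq htilted.tsum_eq

theorem tsum_ite_poisson_le_exp_neg_mul_log (lam v : ℝ) (hlam : 0 ≤ lam) (hv : -1 < v)
    (S : ℕ → Prop) [DecidablePred S]
    (hS : ∀ j, S j → log (1 + v) * (lam * (1 + v)) ≤ log (1 + v) * j) :
    (∑' j : ℕ, if S j then exp (-lam) * lam ^ j / (j ! : ℝ) else 0) ≤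
      exp (-(lam * ((1 + v) * log (1 + v) - v))) := by
  refine (tsum_ite_poisson_le_exp lam _ _ hlam S hS).trans_eq ?_
  rw [exp_log (by linarith)]
  ring_nf

theorem sq_div_mul_div_sq_div (lam x c : ℝ) (hlam : lam ≠ 0) (hx : x ≠ 0) :
    x ^ 2 / (2 * lam) * (2 * c / (x / lam) ^ 2) = lam * c := by
  field_simp

theorem stmt11 (lam : ℝ) (hlam : 0 < lam)
    (h : ℝ → ℝ)
    (hdef : ∀ u : ℝ, -1 < u → u ≠ 0 →
      h u = 2 * ((1 + u) * Real.log (1 + u) - u) / u ^ 2) :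
    (∀ x : ℝ, 0 < x →
      (∑' j : ℕ, if lam + x ≤ (j : ℝ) then
          Real.exp (-lam) * lam ^ j / (Nat.factorial j : ℝ) else 0) ≤
        Real.exp (-(x ^ 2 / (2 * lam)) * h (x / lam))) ∧
    (∀ x : ℝ, 0 < x → x < lam →
      (∑' j : ℕ, if (j : ℝ) ≤ lam - x then
          Real.exp (-lam) * lam ^ j / (Nat.factorial j : ℝ) else 0) ≤
        Real.exp (-(x ^ 2 / (2 * lam)) * h (-(x / lam)))) := by
  refine ⟨fun x hx => ?_, fun x hx hxl => ?_⟩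
  · have hv : 0 < x / lam := div_pos hx hlam
    rw [hdef _ (by linarith) hv.ne', neg_mul, sq_div_mul_div_sq_div _ _ _ hlam.ne' hx.ne']
    refine tsum_ite_poisson_le_exp_neg_mul_log lam _ hlam.le (by linarith) _ fun j hj => ?_
    rw [show lam * (1 + x / lam) = lam + x by field_simp]
    exact mul_le_mul_of_nonneg_left hj (log_nonneg (by linarith))
  · have hv : x / lam < 1 := (div_lt_one hlam).2 hxl
    have hv' : 0 < x / lam := div_pos hx hlam
    rw [hdef _ (by linarith) (neg_ne_zero.2 hv'.ne'), neg_mul, neg_sq,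
      sq_div_mul_div_sq_div _ _ _ hlam.ne' hx.ne']
    refine tsum_ite_poisson_le_exp_neg_mul_log lam _ hlam.le (by linarith) _ fun j hj => ?_
    rw [← sub_eq_add_neg, show lam * (1 - x / lam) = lam - x by field_simp]
    exact mul_le_mul_of_nonpos_left hj (log_nonpos (by linarith) (by linarith))
end

section
/- Let λ > 0 and let N be a Poisson random variable with mean λ. Then for every x > 0: max( P(N ≥ λ + x), P(N ≤ λ − x) ) ≤ exp(−x²/(2(λ + x))); that is, both Σ_{j ∈ ℕ, j ≥ λ+x} e^{−λ}λ^j/j! and Σ_{j ∈ ℕ, j ≤ λ−x} e^{−λ}λ^j/j! are at most exp(−x²/(2(λ+x))). -/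
/-!
Chernoff's method: since `E[s^N] = e^{λ(s-1)}`, Markov's inequality gives
`P(N ≥ a) ≤ e^{λ(s-1)} / s^a` for `s ≥ 1` and `P(N ≤ a) ≤ e^{λ(s-1)} / s^a` for `0 < s ≤ 1`.
For the upper tail take `s = (λ+x)/λ`; the exponent is controlled by `u + u²/2 ≤ -log(1-u)` at
`u = x/(λ+x)`, the first two terms of the Taylor series. For the lower tail take `w = (λ-x)/λ`
and use `(w - w⁻¹)/2 ≤ log w`, which is `sinh t ≤ t` for `t ≤ 0`; this even gives `exp(-x²/(2λ))`.
-/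

open Real

noncomputable def poissonTerm (lam : ℝ) (j : ℕ) : ℝ :=
  exp (-lam) * lam ^ j / (Nat.factorial j : ℝ)

lemma poissonTerm_nonneg {lam : ℝ} (hlam : 0 ≤ lam) (j : ℕ) : 0 ≤ poissonTerm lam j := by
  unfold poissonTerm
  positivity

lemma hasSum_poissonTerm_mul_pow (lam s : ℝ) :
    HasSum (fun j => poissonTerm lam j * s ^ j) (exp (lam * (s - 1))) := by
  convert! (NormedSpace.expSeries_div_hasSum_exp (lam * s)).mul_left (exp (-lam)) using 1
  · funext j
    rw [poissonTerm, mul_pow]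
    ring
  · rw [← exp_eq_exp_ℝ, ← exp_add]
    ring_nf

lemma tsum_ite_poissonTerm_le {lam s c : ℝ} (hlam : 0 ≤ lam) (hs : 0 ≤ s) (hc : 0 < c)
    (P : ℕ → Prop) [DecidablePred P] (hP : ∀ j, P j → c ≤ s ^ j) :
    ∑' j, (if P j then poissonTerm lam j else 0) ≤ exp (lam * (s - 1)) / c := by
  have hsum := (hasSum_poissonTerm_mul_pow lam s).div_const c
  have hterm : ∀ j, (if P j then poissonTerm lam j else 0) ≤ poissonTerm lam j * s ^ j / c := by
    intro j
    have := poissonTerm_nonneg hlam j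
    split_ifs with h
    · rw [le_div_iff₀ hc]
      exact mul_le_mul_of_nonneg_left (hP j h) this
    · positivity
  have hnonneg : ∀ j, 0 ≤ (if P j then poissonTerm lam j else 0) := fun j => by
    split_ifs
    exacts [poissonTerm_nonneg hlam j, le_rfl]
  exact hasSum_le hterm (Summable.of_nonneg_of_le hnonneg hterm hsum.summable).hasSum hsum

lemma tsum_poissonTerm_ge_le {lam s : ℝ} (hlam : 0 ≤ lam) (hs : 1 ≤ s) (a : ℝ) :
    ∑' j : ℕ, (if a ≤ (j : ℝ) then poissonTerm lam j else 0) ≤ exp (lam * (s - 1)) / s ^ a :=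
  tsum_ite_poissonTerm_le hlam (by linarith) (by positivity) _ fun j hj => by
    rw [← rpow_natCast]
    exact rpow_le_rpow_of_exponent_le hs hj

lemma tsum_poissonTerm_le_le {lam s : ℝ} (hlam : 0 ≤ lam) (hs0 : 0 < s) (hs1 : s ≤ 1) (a : ℝ) :
    ∑' j : ℕ, (if (j : ℝ) ≤ a then poissonTerm lam j else 0) ≤ exp (lam * (s - 1)) / s ^ a :=
  tsum_ite_poissonTerm_le hlam hs0.le (by positivity) _ fun j hj => by
    rw [← rpow_natCast]
    exact rpow_le_rpow_of_exponent_ge hs0 hs1 hj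

lemma add_sq_div_two_le_neg_log_one_sub {u : ℝ} (h0 : 0 ≤ u) (h1 : u < 1) :
    u + u ^ 2 / 2 ≤ -log (1 - u) := by
  have := sum_le_hasSum (Finset.range 2) (fun i _ => by positivity)
    (hasSum_pow_div_log_of_abs_lt_one (by rwa [abs_of_nonneg h0]))
  norm_num [Finset.sum_range_succ] at this
  exact this

lemma sub_inv_div_two_le_log {w : ℝ} (hw0 : 0 < w) (hw1 : w ≤ 1) : (w - w⁻¹) / 2 ≤ log w := by
  rw [← sinh_log hw0]
  exact sinh_le_self_iff.2 (log_nonpos hw0.le hw1)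

lemma tsum_poissonTerm_upper_tail_le {lam x : ℝ} (hlam : 0 < lam) (hx : 0 ≤ x) :
    ∑' j : ℕ, (if lam + x ≤ (j : ℝ) then poissonTerm lam j else 0) ≤
      exp (-(x ^ 2 / (2 * (lam + x)))) := by
  have hpos : 0 < lam + x := by linarith
  set s := (lam + x) / lam with hs
  have hs1 : 1 ≤ s := by rw [hs, le_div_iff₀ hlam]; linarith
  have hlog : x / (lam + x) + (x / (lam + x)) ^ 2 / 2 ≤ log s := by
    have hu : 1 - x / (lam + x) = s⁻¹ := by rw [hs]; field_simp; ring
    simpa [hu, log_inv] using add_sq_div_two_le_neg_log_one_sub (u := x / (lam + x))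
      (by positivity) ((div_lt_one hpos).2 (by linarith))
  refine (tsum_poissonTerm_ge_le hlam.le hs1 _).trans ?_
  rw [rpow_def_of_pos (by positivity), ← exp_sub, exp_le_exp]
  have hmean : lam * (s - 1) = x := by rw [hs]; field_simp; ring
  have hexp : (lam + x) * (x / (lam + x) + (x / (lam + x)) ^ 2 / 2) =
      x + x ^ 2 / (2 * (lam + x)) := by field_simp
  linarith [mul_le_mul_of_nonneg_left hlog hpos.le]

lemma tsum_poissonTerm_lower_tail_le {lam x : ℝ} (hlam : 0 < lam) (hx : 0 ≤ x) :
    ∑' j : ℕ, (if (j : ℝ) ≤ lam - x then poissonTerm lam j else 0) ≤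
      exp (-(x ^ 2 / (2 * lam))) := by
  rcases lt_trichotomy x lam with hlt | rfl | hgt
  · set w := (lam - x) / lam with hw
    have hw0 : 0 < w := div_pos (by linarith) hlam
    have hw1 : w ≤ 1 := by rw [hw, div_le_one hlam]; linarith
    refine (tsum_poissonTerm_le_le hlam.le hw0 hw1 _).trans ?_
    rw [rpow_def_of_pos hw0, ← exp_sub, exp_le_exp]
    have hmass : lam - x = lam * w := by rw [hw]; field_simp
    have hsq : x ^ 2 / (2 * lam) = lam * (1 - w) ^ 2 / 2 := by
      rw [show x = lam * (1 - w) by rw [hw]; field_simp; ring]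
      field_simp
    have hlog : lam * (w ^ 2 - 1) / 2 ≤ log w * (lam * w) := by
      calc lam * (w ^ 2 - 1) / 2 = (w - w⁻¹) / 2 * (lam * w) := by field_simp
        _ ≤ log w * (lam * w) := by gcongr; exact sub_inv_div_two_le_log hw0 hw1
    rw [hmass, hsq]
    linarith
  · -- only `j = 0` contributes, so take `s = 0`
    refine (tsum_ite_poissonTerm_le hlam.le le_rfl one_pos _ fun j hj => ?_).trans ?_
    · have : j = 0 := by exact_mod_cast (sub_self x ▸ hj).antisymm j.cast_nonneg
      simp [this]
    · rw [div_one, exp_le_exp]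
      have : x ^ 2 / (2 * x) = x / 2 := by field_simp
      linarith
  · have hzero : ∀ j : ℕ, ¬ (j : ℝ) ≤ lam - x := fun j hj => by
      linarith [j.cast_nonneg (α := ℝ)]
    simp only [hzero, if_false, tsum_zero]
    positivity

theorem stmt12 (lam : ℝ) (hlam : 0 < lam) (x : ℝ) (hx : 0 < x) :
    (∑' j : ℕ, if lam + x ≤ (j : ℝ) then
        Real.exp (-lam) * lam ^ j / (Nat.factorial j : ℝ) else 0) ≤
      Real.exp (-(x ^ 2 / (2 * (lam + x)))) ∧
    (∑' j : ℕ, if (j : ℝ) ≤ lam - x then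
        Real.exp (-lam) * lam ^ j / (Nat.factorial j : ℝ) else 0) ≤
      Real.exp (-(x ^ 2 / (2 * (lam + x)))) := by
  have hdenom : x ^ 2 / (2 * (lam + x)) ≤ x ^ 2 / (2 * lam) := by gcongr; linarith
  exact ⟨tsum_poissonTerm_upper_tail_le hlam hx.le,
    (tsum_poissonTerm_lower_tail_le hlam hx.le).trans (exp_le_exp.2 (neg_le_neg hdenom))⟩
end

section
/- For every real λ ≥ 0 and every integer k ≥ 1: Σ_{j=0}^{k−1} e^{−λ}λ^j/j! ≤ e·Σ_{j=0}^{k−1} e^{−λ/(j+2)} ≤ e·k·e^{−λ/(k+1)}. In particular the probability that a Poisson random variable with mean λ is strictly less than k is at most e·k·e^{−λ/(k+1)}. -/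
/-!
Rescaling by `c = (j + 2) / (j + 1)`, the bound `(λ / c)^j / j! ≤ e^{λ / c}` gives
`λ^j / j! ≤ c^j e^{λ / c}`, where `c^j ≤ (1 + 1/(j+1))^(j+1) ≤ e` and
`e^{-λ} e^{λ / c} = e^{-λ/(j+2)}`. Summing over `j < k` gives the first inequality; the second
holds because each exponent `-λ/(j+2)` is at most `-λ/(k+1)`.
-/

namespace Real

lemma pow_div_factorial_le_pow_mul_exp_div {x c : ℝ} (hx : 0 ≤ x) (hc : 0 < c) (n : ℕ) :
    x ^ n / n.factorial ≤ c ^ n * exp (x / c) := by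
  calc x ^ n / n.factorial = c ^ n * ((x / c) ^ n / n.factorial) := by
        rw [div_pow]
        field_simp
    _ ≤ c ^ n * exp (x / c) := by
        gcongr
        exact pow_div_factorial_le_exp _ (div_nonneg hx hc.le) n

lemma one_add_inv_succ_pow_le_exp_one (n : ℕ) : (1 + ((n : ℝ) + 1)⁻¹) ^ n ≤ exp 1 :=
  calc (1 + ((n : ℝ) + 1)⁻¹) ^ n ≤ (1 + ((n : ℝ) + 1)⁻¹) ^ (n + 1) :=
        pow_le_pow_right₀ (by simp [add_nonneg]) n.le_succ
    _ ≤ exp 1 := by exact_mod_cast one_add_inv_pow_le_exp (n := n + 1)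

lemma exp_neg_mul_pow_div_factorial_le {lam : ℝ} (hlam : 0 ≤ lam) (j : ℕ) :
    exp (-lam) * lam ^ j / j.factorial ≤ exp 1 * exp (-(lam / ((j : ℝ) + 2))) := by
  set c : ℝ := 1 + ((j : ℝ) + 1)⁻¹ with hc_def
  have hc : 0 < c := by positivity
  have hexp : exp (-lam) * exp (lam / c) = exp (-(lam / ((j : ℝ) + 2))) := by
    rw [← exp_add]
    congr 1
    rw [hc_def]
    field_simp
    ring
  calc exp (-lam) * lam ^ j / j.factorial = exp (-lam) * (lam ^ j / j.factorial) := mul_div_assoc ..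
    _ ≤ exp (-lam) * (c ^ j * exp (lam / c)) := by
        gcongr
        exact pow_div_factorial_le_pow_mul_exp_div hlam hc j
    _ = c ^ j * exp (-(lam / ((j : ℝ) + 2))) := by rw [← hexp]; ring
    _ ≤ exp 1 * exp (-(lam / ((j : ℝ) + 2))) := by
        gcongr
        exact one_add_inv_succ_pow_le_exp_one j

lemma sum_range_exp_neg_div_le {lam : ℝ} (hlam : 0 ≤ lam) (k : ℕ) :
    ∑ j ∈ Finset.range k, exp (-(lam / ((j : ℝ) + 2))) ≤ k * exp (-(lam / ((k : ℝ) + 1))) := by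
  refine (Finset.sum_le_card_nsmul _ _ (exp (-(lam / ((k : ℝ) + 1)))) fun j hj => ?_).trans_eq
    (by simp)
  have hjk : (j : ℝ) + 1 ≤ k := by exact_mod_cast Finset.mem_range.1 hj
  exact exp_le_exp.2 <| neg_le_neg <| div_le_div_of_nonneg_left hlam (by positivity) (by linarith)

end Real

theorem stmt13_general (lam : ℝ) (hlam : 0 ≤ lam) (k : ℕ) :
    (∑ j ∈ Finset.range k, Real.exp (-lam) * lam ^ j / (Nat.factorial j : ℝ)) ≤
      Real.exp 1 * ∑ j ∈ Finset.range k, Real.exp (-(lam / ((j : ℝ) + 2))) ∧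
    Real.exp 1 * (∑ j ∈ Finset.range k, Real.exp (-(lam / ((j : ℝ) + 2)))) ≤
      Real.exp 1 * (k : ℝ) * Real.exp (-(lam / ((k : ℝ) + 1))) := by
  refine ⟨?_, ?_⟩
  · rw [Finset.mul_sum]
    exact Finset.sum_le_sum fun j _ => Real.exp_neg_mul_pow_div_factorial_le hlam j
  · rw [mul_assoc]
    exact mul_le_mul_of_nonneg_left (Real.sum_range_exp_neg_div_le hlam k) (Real.exp_pos 1).le

theorem stmt13 (lam : ℝ) (hlam : 0 ≤ lam) (k : ℕ) (hk : 1 ≤ k) :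
    (∑ j ∈ Finset.range k, Real.exp (-lam) * lam ^ j / (Nat.factorial j : ℝ)) ≤
      Real.exp 1 * ∑ j ∈ Finset.range k, Real.exp (-(lam / ((j : ℝ) + 2))) ∧
    Real.exp 1 * (∑ j ∈ Finset.range k, Real.exp (-(lam / ((j : ℝ) + 2)))) ≤
      Real.exp 1 * (k : ℝ) * Real.exp (-(lam / ((k : ℝ) + 1))) :=
  stmt13_general lam hlam k
end

section
/- For every integer d ≥ 1, every integer j ≥ 0 and every real n > 0: n·∫_{[0,1]^d} e^{−n|x|}·(n|x|)^j dx = (1/(d−1)!)·∫_0^n (log n − log y)^{d−1}·y^j·e^{−y} dy, where for x = (x⁽¹⁾,…,x⁽ᵈ⁾) ∈ [0,1]^d we write |x| := Π_{i=1}^d x⁽ⁱ⁾ and the left-hand integral is with respect to d-dimensional Lebesgue measure. -/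
/-!
The product of `m + 1` independent uniform variables on `(0, 1]` has density
`(-log t) ^ m / m!`. By induction: integrating out one coordinate `s` of the cube with the
substitution `u = t s` (where `t` is the product of the other coordinates) turns the integrand
into `t⁻¹ ∫_0^t g`; Fubini on the triangle `0 < u ≤ t ≤ 1` then leaves
`∫_u^1 (-log t) ^ m / (m! t) dt = (-log u) ^ (m + 1) / (m + 1)!`.
The factor `n` is absorbed by the linear substitution `y = n t`.
-/

open MeasureTheory Real

noncomputable section

open Set
open scoped ENNReal Nat

lemma setLIntegral_Ioc_zero_one_comp_const_mul {c : ℝ} (hc : 0 < c) (g : ℝ → ℝ≥0∞) :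
    ∫⁻ s in Ioc 0 1, g (c * s) = ENNReal.ofReal c⁻¹ * ∫⁻ u in Ioc 0 c, g u := by
  have he : MeasurableEmbedding (c * ·) := (Homeomorph.mulLeft₀ c hc.ne').measurableEmbedding
  have hpre : (c * ·) ⁻¹' Ioc 0 c = Ioc 0 1 := by
    ext s
    simp only [mem_preimage, mem_Ioc, mul_pos_iff_of_pos_left hc]
    rw [mul_le_iff_le_one_right hc]
  rw [← smul_eq_mul, ← lintegral_smul_measure, ← Measure.restrict_smul,
    ← abs_of_pos (inv_pos.2 hc), ← map_volume_mul_left hc.ne', he.restrict_map,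
    he.lintegral_map, hpre]

lemma lintegral_Ioc_mul_lintegral_Ioc_comm {w g : ℝ → ℝ≥0∞} (hw : Measurable w)
    (hg : Measurable g) (a b : ℝ) :
    ∫⁻ t in Ioc a b, w t * ∫⁻ u in Ioc a t, g u =
      ∫⁻ u in Ioc a b, (∫⁻ t in Icc u b, w t) * g u := by
  set F : ℝ → ℝ → ℝ≥0∞ := fun t u => if u ≤ t then w t * g u else 0
  have hF : Measurable (Function.uncurry F) :=
    Measurable.ite (measurableSet_le measurable_snd measurable_fst)
      ((hw.comp measurable_fst).mul (hg.comp measurable_snd)) measurable_const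
  have h_left : ∀ t ∈ Ioc a b, w t * ∫⁻ u in Ioc a t, g u = ∫⁻ u in Ioc a b, F t u := by
    intro t ht
    have hset : Iic t ∩ Ioc a b = Ioc a t := by
      ext u; simp only [mem_inter_iff, mem_Iic, mem_Ioc]
      exact ⟨fun h => ⟨h.2.1, h.1⟩, fun h => ⟨h.2, h.1, h.2.trans ht.2⟩⟩
    rw [← lintegral_const_mul _ hg, ← hset, ← setLIntegral_indicator measurableSet_Iic]
    simp only [F, indicator_apply, mem_Iic]
  have h_right : ∀ u ∈ Ioc a b, (∫⁻ t in Icc u b, w t) * g u = ∫⁻ t in Ioc a b, F t u := by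
    intro u hu
    have hset : Ici u ∩ Ioc a b = Icc u b := by
      ext t; simp only [mem_inter_iff, mem_Ici, mem_Ioc, mem_Icc]
      exact ⟨fun h => ⟨h.1, h.2.2⟩, fun h => ⟨h.1, hu.1.trans_le h.1, h.2⟩⟩
    rw [← lintegral_mul_const _ hw, ← hset, ← setLIntegral_indicator measurableSet_Ici]
    simp only [F, indicator_apply, mem_Ici]
  rw [setLIntegral_congr_fun measurableSet_Ioc h_left,
    setLIntegral_congr_fun measurableSet_Ioc h_right]
  exact lintegral_lintegral_swap hF.aemeasurable

def uniformProductDensity (m : ℕ) (t : ℝ) : ℝ := (-log t) ^ m / m !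

lemma uniformProductDensity_nonneg (m : ℕ) {t : ℝ} (ht₀ : 0 ≤ t) (ht₁ : t ≤ 1) :
    0 ≤ uniformProductDensity m t :=
  div_nonneg (pow_nonneg (neg_nonneg.2 (log_nonpos ht₀ ht₁)) m) (Nat.cast_nonneg _)

lemma uniformProductDensity_zero (t : ℝ) : uniformProductDensity 0 t = 1 := by
  simp [uniformProductDensity]

@[fun_prop]
lemma measurable_uniformProductDensity (m : ℕ) : Measurable (uniformProductDensity m) := by
  unfold uniformProductDensity
  fun_prop

lemma continuousOn_uniformProductDensity (m : ℕ) :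
    ContinuousOn (uniformProductDensity m) {0}ᶜ :=
  ((continuousOn_log.neg).pow m).div_const _

lemma hasDerivAt_uniformProductDensity_succ (m : ℕ) {t : ℝ} (ht : t ≠ 0) :
    HasDerivAt (uniformProductDensity (m + 1)) (-(t⁻¹ * uniformProductDensity m t)) t := by
  refine ((((hasDerivAt_log ht).fun_neg).fun_pow (m + 1)).div_const ((m + 1)! : ℝ)).congr_deriv ?_
  rw [uniformProductDensity, Nat.factorial_succ, Nat.add_sub_cancel]
  push_cast
  field_simp

lemma integral_inv_mul_uniformProductDensity (m : ℕ) {u : ℝ} (hu : 0 < u) :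
    ∫ t in u..1, t⁻¹ * uniformProductDensity m t = uniformProductDensity (m + 1) u := by
  have hpos : ∀ t ∈ uIcc u 1, t ≠ 0 := fun t ht =>
    (lt_min hu one_pos |>.trans_le ht.1).ne'
  have hcont : ContinuousOn (fun t => t⁻¹ * uniformProductDensity m t) (uIcc u 1) :=
    (continuousOn_inv₀.mono fun t ht => hpos t ht).mul
      ((continuousOn_uniformProductDensity m).mono fun t ht => hpos t ht)
  rw [intervalIntegral.integral_eq_sub_of_hasDerivAt
    (f := fun t => -uniformProductDensity (m + 1) t)
    (fun t ht => (hasDerivAt_uniformProductDensity_succ m (hpos t ht)).neg.congr_deriv (neg_neg _))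
    hcont.intervalIntegrable]
  simp [uniformProductDensity]

lemma setLIntegral_Icc_inv_mul_uniformProductDensity (m : ℕ) {u : ℝ} (hu₀ : 0 < u)
    (hu₁ : u ≤ 1) :
    ∫⁻ t in Icc u 1, ENNReal.ofReal t⁻¹ * ENNReal.ofReal (uniformProductDensity m t) =
      ENNReal.ofReal (uniformProductDensity (m + 1) u) := by
  have hpos : ∀ t ∈ Icc u 1, 0 < t := fun t ht => hu₀.trans_le ht.1
  have hcont : ContinuousOn (fun t => t⁻¹ * uniformProductDensity m t) (Icc u 1) :=
    (continuousOn_inv₀.mono fun t ht => (hpos t ht).ne').mul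
      ((continuousOn_uniformProductDensity m).mono fun t ht => (hpos t ht).ne')
  have hnonneg : 0 ≤ᵐ[volume.restrict (Icc u 1)] fun t => t⁻¹ * uniformProductDensity m t :=
    (ae_restrict_iff' measurableSet_Icc).2 <| .of_forall fun t ht =>
      mul_nonneg (inv_nonneg.2 (hpos t ht).le)
        (uniformProductDensity_nonneg m (hpos t ht).le ht.2)
  rw [← integral_inv_mul_uniformProductDensity m hu₀, intervalIntegral.integral_of_le hu₁,
    ← integral_Icc_eq_integral_Ioc,
    ofReal_integral_eq_lintegral_ofReal (hcont.integrableOn_compact isCompact_Icc) hnonneg]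
  refine setLIntegral_congr_fun measurableSet_Icc fun t ht => ?_
  rw [ENNReal.ofReal_mul (inv_nonneg.2 (hpos t ht).le)]

theorem lintegral_pi_Ioc_comp_prod (m : ℕ) {g : ℝ → ℝ≥0∞} (hg : Measurable g) :
    ∫⁻ x, g (∏ i, x i) ∂(Measure.pi fun _ : Fin (m + 1) => volume.restrict (Ioc (0 : ℝ) 1)) =
      ∫⁻ t in Ioc 0 1, ENNReal.ofReal (uniformProductDensity m t) * g t := by
  induction m generalizing g with
  | zero =>
    simp only [uniformProductDensity_zero, ENNReal.ofReal_one, one_mul, Fin.prod_univ_succ,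
      Fin.prod_univ_zero, mul_one]
    exact (measurePreserving_funUnique _ (Fin 1)).lintegral_comp_emb
      (MeasurableEquiv.measurableEmbedding _) g
  | succ m ih =>
    set ν := volume.restrict (Ioc (0 : ℝ) 1)
    have hsplit := measurePreserving_piFinSuccAbove (fun _ : Fin (m + 2) => ν) (Fin.last _)
    have hh : Measurable fun t => ∫⁻ s, g (t * s) ∂ν :=
      (hg.comp (measurable_fst.mul measurable_snd)).lintegral_prod_right'
    calc ∫⁻ x, g (∏ i, x i) ∂(Measure.pi fun _ : Fin (m + 2) => ν)
        = ∫⁻ p, g ((∏ i, p.2 i) * p.1) ∂(ν.prod (Measure.pi fun _ : Fin (m + 1) => ν)) := by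
          rw [← hsplit.lintegral_comp_emb (MeasurableEquiv.measurableEmbedding _)]
          simp only [Fin.prod_univ_castSucc, MeasurableEquiv.piFinSuccAbove_apply,
            Fin.insertNthEquiv_symm_apply, Fin.removeNth, Fin.succAbove_last]
      _ = ∫⁻ x, ∫⁻ s, g ((∏ i, x i) * s) ∂ν ∂(Measure.pi fun _ : Fin (m + 1) => ν) :=
          lintegral_prod_symm _ (hg.comp (by fun_prop)).aemeasurable
      _ = ∫⁻ t in Ioc 0 1, ENNReal.ofReal (uniformProductDensity m t) * ∫⁻ s, g (t * s) ∂ν :=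
          ih hh
      _ = ∫⁻ t in Ioc 0 1, (ENNReal.ofReal t⁻¹ * ENNReal.ofReal (uniformProductDensity m t)) *
            ∫⁻ u in Ioc 0 t, g u := by
          refine setLIntegral_congr_fun measurableSet_Ioc fun t ht => ?_
          rw [setLIntegral_Ioc_zero_one_comp_const_mul ht.1]
          ring
      _ = ∫⁻ u in Ioc 0 1,
            (∫⁻ t in Icc u 1, ENNReal.ofReal t⁻¹ * ENNReal.ofReal (uniformProductDensity m t)) *
              g u :=
          lintegral_Ioc_mul_lintegral_Ioc_comm (by fun_prop) hg 0 1
      _ = ∫⁻ u in Ioc 0 1, ENNReal.ofReal (uniformProductDensity (m + 1) u) * g u :=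
          setLIntegral_congr_fun measurableSet_Ioc fun u hu => by
            rw [setLIntegral_Icc_inv_mul_uniformProductDensity m hu.1 hu.2]

lemma volume_restrict_Icc_zero_one_eq_pi (ι : Type*) [Fintype ι] :
    volume.restrict (Icc (0 : ι → ℝ) 1) =
      Measure.pi fun _ => volume.restrict (Ioc (0 : ℝ) 1) := by
  rw [← pi_univ_Icc, volume_pi, Measure.restrict_pi_pi]
  exact congrArg Measure.pi (funext fun _ => Measure.restrict_congr_set Ioc_ae_eq_Icc.symm)

theorem lintegral_Icc_comp_const_mul_prod (m : ℕ) {g : ℝ → ℝ≥0∞} (hg : Measurable g) {c : ℝ}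
    (hc : 0 < c) :
    ENNReal.ofReal c * ∫⁻ x in Icc (0 : Fin (m + 1) → ℝ) 1, g (c * ∏ i, x i) =
      ∫⁻ y in Ioc 0 c, ENNReal.ofReal ((log c - log y) ^ m / m !) * g y := by
  have hlog : ∀ t ∈ Ioc (0 : ℝ) 1, uniformProductDensity m t = (log c - log (c * t)) ^ m / m ! :=
    fun t ht => by rw [uniformProductDensity, log_mul hc.ne' ht.1.ne', sub_add_cancel_left]
  rw [volume_restrict_Icc_zero_one_eq_pi,
    lintegral_pi_Ioc_comp_prod m (g := fun t => g (c * t)) (by fun_prop),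
    setLIntegral_congr_fun measurableSet_Ioc fun t ht => by rw [hlog t ht],
    setLIntegral_Ioc_zero_one_comp_const_mul hc
      (fun y => ENNReal.ofReal ((log c - log y) ^ m / m !) * g y),
    ← mul_assoc, ← ENNReal.ofReal_mul hc.le, mul_inv_cancel₀ hc.ne', ENNReal.ofReal_one, one_mul]

theorem integral_Icc_comp_const_mul_prod (m : ℕ) {g : ℝ → ℝ} (hg : Measurable g)
    (hg_nonneg : ∀ y, 0 ≤ y → 0 ≤ g y) {c : ℝ} (hc : 0 < c) :
    c * ∫ x in Icc (0 : Fin (m + 1) → ℝ) 1, g (c * ∏ i, x i) =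
      ∫ y in Ioc 0 c, (log c - log y) ^ m / m ! * g y := by
  have hweight : ∀ y ∈ Ioc 0 c, 0 ≤ (log c - log y) ^ m / m ! := fun y hy =>
    div_nonneg (pow_nonneg (sub_nonneg.2 (log_le_log hy.1 hy.2)) m) (Nat.cast_nonneg _)
  have key := congrArg ENNReal.toReal
    (lintegral_Icc_comp_const_mul_prod m (g := fun y => ENNReal.ofReal (g y))
      hg.ennreal_ofReal hc)
  rw [ENNReal.toReal_mul, ENNReal.toReal_ofReal hc.le] at key
  rw [integral_eq_lintegral_of_nonneg_ae, integral_eq_lintegral_of_nonneg_ae, key]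
  · congr 1
    refine setLIntegral_congr_fun measurableSet_Ioc fun y hy => ?_
    rw [ENNReal.ofReal_mul (hweight y hy)]
  · exact (ae_restrict_iff' measurableSet_Ioc).2 <| .of_forall fun y hy =>
      mul_nonneg (hweight y hy) (hg_nonneg y hy.1.le)
  · exact (by fun_prop : Measurable _).aestronglyMeasurable
  · exact (ae_restrict_iff' measurableSet_Icc).2 <| .of_forall fun x hx =>
      hg_nonneg _ (mul_nonneg hc.le (Finset.prod_nonneg fun i _ => hx.1 i))
  · exact (by fun_prop : Measurable _).aestronglyMeasurable

theorem stmt14 {d : ℕ} (hd : 1 ≤ d) (j : ℕ) (n : ℝ) (hn : 0 < n) :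
    n * ∫ x in Set.Icc (0 : Fin d → ℝ) 1,
        Real.exp (-(n * ∏ i, x i)) * (n * ∏ i, x i) ^ j =
      (1 / (Nat.factorial (d - 1) : ℝ)) *
        ∫ y in Set.Ioc (0 : ℝ) n,
          (Real.log n - Real.log y) ^ (d - 1) * y ^ j * Real.exp (-y) := by
  obtain ⟨m, rfl⟩ := Nat.exists_eq_add_of_le' hd
  rw [Nat.add_sub_cancel, integral_Icc_comp_const_mul_prod m (g := fun y => exp (-y) * y ^ j)
    (by fun_prop) (fun y hy => by positivity) hn, ← integral_const_mul]
  congr 1 with y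
  ring
end
end

section
/- For every natural number l there exists a constant C_l > 0 such that for all integers j ≥ 2: ∫_0^∞ |log y|^l·y^j·e^{−y} dy ≤ C_l·(log j)^l·j!. Equivalently, if X is a Gamma(j+1,1)-distributed random variable, then E[|log X|^l] ≤ C_l·(log j)^l. -/
/-!
Split `(0, ∞)` at `1` and `j²`. From `x ^ l ≤ l! eˣ` one gets `|log y| ^ l ≤ l! / y` for `y ≤ 1`
and `(log y) ^ l ≤ 2 ^ l l! √y ≤ 2 ^ l l! y / j` for `y ≥ j²`, while `(log y) ^ l ≤ 2 ^ l (log j) ^ l`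
in between. Against the Gamma weight `y ^ j e^{-y}` the factors `1 / y` and `y / j` cost only
`(j - 1)!` and `(j + 1)! / j`, both `O(j!)`, and `1 ≤ (log j / log 2) ^ l` absorbs them.
-/

open MeasureTheory Real
open scoped Nat

lemma pow_le_factorial_mul_exp {x : ℝ} (hx : 0 ≤ x) (n : ℕ) : x ^ n ≤ n ! * exp x :=
  (div_le_iff₀' (by positivity)).1 (pow_div_factorial_le_exp x hx n)

lemma abs_log_pow_le_factorial_mul_inv {y : ℝ} (hy₀ : 0 < y) (hy₁ : y ≤ 1) (n : ℕ) :
    |log y| ^ n ≤ n ! * y⁻¹ := by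
  have habs : |log y| = -log y := abs_of_nonpos (log_nonpos hy₀.le hy₁)
  simpa [habs, exp_neg, exp_log hy₀] using pow_le_factorial_mul_exp (abs_nonneg (log y)) n

lemma log_pow_le_two_pow_mul_factorial_mul_sqrt {y : ℝ} (hy : 1 ≤ y) (n : ℕ) :
    log y ^ n ≤ 2 ^ n * n ! * √y := by
  have hexp : exp (log y / 2) = √y := by
    rw [sqrt_eq_rpow, rpow_def_of_pos (one_pos.trans_le hy)]; ring_nf
  calc log y ^ n = 2 ^ n * (log y / 2) ^ n := by rw [div_pow]; field_simp
    _ ≤ 2 ^ n * (n ! * exp (log y / 2)) := by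
        gcongr; exact pow_le_factorial_mul_exp (by linarith [log_nonneg hy]) n
    _ = 2 ^ n * n ! * √y := by rw [hexp]; ring

lemma abs_log_pow_le {j : ℝ} (hj : 1 ≤ j) {y : ℝ} (hy : 0 < y) (n : ℕ) :
    |log y| ^ n ≤ 2 ^ n * n ! * (y⁻¹ + log j ^ n + y / j) := by
  have hj₀ : 0 < j := one_pos.trans_le hj
  have hinv : 0 ≤ y⁻¹ := by positivity
  have hlogj : 0 ≤ log j ^ n := pow_nonneg (log_nonneg hj) n
  have hdiv : 0 ≤ y / j := by positivity
  rcases le_total y 1 with hy₁ | hy₁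
  · calc |log y| ^ n ≤ n ! * y⁻¹ := abs_log_pow_le_factorial_mul_inv hy hy₁ n
      _ ≤ 2 ^ n * n ! * y⁻¹ := by
          gcongr; exact le_mul_of_one_le_left (by positivity) (one_le_pow₀ one_le_two)
      _ ≤ _ := by gcongr; linarith
  rw [abs_of_nonneg (log_nonneg hy₁)]
  rcases le_total y (j ^ 2) with hyj | hyj
  · have hlog : log y ≤ 2 * log j := by
      rw [← log_rpow hj₀]; exact log_le_log hy (by exact_mod_cast hyj)
    calc log y ^ n ≤ (2 * log j) ^ n := by gcongr; exact log_nonneg hy₁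
      _ = 2 ^ n * log j ^ n := mul_pow _ _ _
      _ ≤ 2 ^ n * n ! * log j ^ n := by
          gcongr; exact le_mul_of_one_le_right (by positivity) (mod_cast n.factorial_pos)
      _ ≤ _ := by gcongr; linarith
  · have hsqrt : √y ≤ y / j := by
      rw [le_div_iff₀ hj₀]
      calc √y * j ≤ √y * √y := by gcongr; exact le_sqrt_of_sq_le hyj
        _ = y := mul_self_sqrt hy.le
    calc log y ^ n ≤ 2 ^ n * n ! * √y := log_pow_le_two_pow_mul_factorial_mul_sqrt hy₁ n
      _ ≤ 2 ^ n * n ! * (y / j) := by gcongr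
      _ ≤ _ := by gcongr; linarith

lemma integrableOn_pow_mul_exp_neg (n : ℕ) :
    IntegrableOn (fun y : ℝ ↦ y ^ n * exp (-y)) (Set.Ioi 0) := by
  refine (GammaIntegral_convergent (s := n + 1) (by positivity)).congr_fun
    (fun y _ ↦ ?_) measurableSet_Ioi
  simp [rpow_natCast, mul_comm]

lemma integral_pow_mul_exp_neg (n : ℕ) : ∫ y in Set.Ioi (0 : ℝ), y ^ n * exp (-y) = n ! := by
  rw [← Gamma_nat_eq_factorial, Gamma_eq_integral (by positivity)]
  refine setIntegral_congr_fun measurableSet_Ioi fun y _ ↦ ?_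
  simp [rpow_natCast, mul_comm]

lemma factorial_pred_add_factorial_succ_div_le {j : ℕ} (hj : 1 ≤ j) :
    ((j - 1) ! : ℝ) + (j + 1) ! / j ≤ 3 * j ! := by
  have hj₁ : (1 : ℝ) ≤ j := by exact_mod_cast hj
  have hpred : ((j - 1) ! : ℝ) ≤ j ! := by exact_mod_cast Nat.factorial_le (Nat.sub_le j 1)
  have hsucc : ((j + 1) ! : ℝ) / j ≤ 2 * j ! := by
    rw [Nat.factorial_succ, div_le_iff₀ (by positivity)]; push_cast
    nlinarith [(by positivity : (0 : ℝ) ≤ j !)]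
  linarith

lemma integral_abs_log_pow_mul_pow_mul_exp_neg_le {j : ℕ} (hj : 1 ≤ j) (l : ℕ) :
    ∫ y in Set.Ioi (0 : ℝ), |log y| ^ l * y ^ j * exp (-y) ≤
      2 ^ l * l ! * (log j ^ l + 3) * j ! := by
  set K : ℝ := 2 ^ l * (l ! : ℝ)
  let g : ℕ → ℝ → ℝ := fun n y ↦ y ^ n * exp (-y)
  have hbound : ∀ y ∈ Set.Ioi (0 : ℝ), |log y| ^ l * y ^ j * exp (-y) ≤
      K * g (j - 1) y + K * log j ^ l * g j y + K / j * g (j + 1) y := by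
    intro y (hy : 0 < y)
    have hpow : y ^ j = y * y ^ (j - 1) := by rw [← pow_succ', Nat.sub_add_cancel hj]
    calc |log y| ^ l * y ^ j * exp (-y) ≤ K * (y⁻¹ + log j ^ l + y / j) * y ^ j * exp (-y) := by
          gcongr; exact abs_log_pow_le (by exact_mod_cast hj) hy l
      _ = _ := by simp only [g]; rw [pow_succ, hpow]; field_simp
  have hint : ∀ n, IntegrableOn (g n) (Set.Ioi 0) := integrableOn_pow_mul_exp_neg
  have hfac := factorial_pred_add_factorial_succ_div_le hj
  calc ∫ y in Set.Ioi (0 : ℝ), |log y| ^ l * y ^ j * exp (-y)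
      ≤ ∫ y in Set.Ioi (0 : ℝ), K * g (j - 1) y + K * log j ^ l * g j y + K / j * g (j + 1) y :=
        integral_mono_of_nonneg
          ((ae_restrict_mem measurableSet_Ioi).mono fun y (hy : 0 < y) ↦ by positivity)
          ((((hint _).const_mul _).add ((hint _).const_mul _)).add ((hint _).const_mul _))
          ((ae_restrict_mem measurableSet_Ioi).mono hbound)
    _ = K * ((j - 1) ! + log j ^ l * j ! + (j + 1) ! / j) := by
        rw [integral_add, integral_add, integral_const_mul, integral_const_mul,
          integral_const_mul]
        · simp only [g, integral_pow_mul_exp_neg]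
          ring
        all_goals first
          | exact (hint _).const_mul _
          | exact ((hint _).const_mul _).add ((hint _).const_mul _)
    _ ≤ K * ((log j ^ l + 3) * j !) := by gcongr; linarith
    _ = K * (log j ^ l + 3) * j ! := by ring

theorem stmt17 (l : ℕ) :
    ∃ C : ℝ, 0 < C ∧ ∀ j : ℕ, 2 ≤ j →
      (∫ y in Set.Ioi (0 : ℝ), |Real.log y| ^ l * y ^ j * Real.exp (-y)) ≤
        C * (Real.log j) ^ l * (Nat.factorial j : ℝ) := by
  have hlog2 : 0 < log 2 := log_pos one_lt_two
  refine ⟨2 ^ l * l ! * (1 + 3 / log 2 ^ l), by positivity, fun j hj ↦ ?_⟩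
  have hlogj : log 2 ≤ log j := log_le_log two_pos (by exact_mod_cast hj)
  have hthree : 3 ≤ 3 / log 2 ^ l * log j ^ l := by
    rw [div_mul_eq_mul_div, le_div_iff₀ (by positivity)]
    gcongr
  calc ∫ y in Set.Ioi (0 : ℝ), |log y| ^ l * y ^ j * exp (-y)
      ≤ 2 ^ l * l ! * (log j ^ l + 3) * j ! :=
        integral_abs_log_pow_mul_pow_mul_exp_neg_le (one_le_two.trans hj) l
    _ ≤ 2 ^ l * l ! * (1 + 3 / log 2 ^ l) * log j ^ l * j ! := by
        rw [mul_assoc _ (1 + _), add_mul, one_mul]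
        gcongr
end

section
/- For every s > 0, every α ∈ (0,1) and every y ∈ ℝ^d: c_{1,s,x₀}(y)^α ≤ exp(−α s ∫_{Rect(x₀,y)} g(z)dz) + c_{α,s,x₀}(y). -/
open MeasureTheory Real

noncomputable section

/-- The closed hyperrectangle determined by two points of `ℝ^d`. -/
def Rect {d : ℕ} (x₁ x₂ : Fin d → ℝ) : Set (Fin d → ℝ) :=
  {z | ∀ i, min (x₁ i) (x₂ i) ≤ z i ∧ z i ≤ max (x₁ i) (x₂ i)}

/-- The function `c_{α,s,x₀}` from the paper. -/
def cfun {d : ℕ} (g φ : (Fin d → ℝ) → ℝ) (x₀ : Fin d → ℝ) (α s : ℝ)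
    (y : Fin d → ℝ) : ℝ :=
  s * ∫ x, (Set.indicator (Rect x₀ x) (fun _ => (1 : ℝ)) y) *
    Real.exp (-(α * s) * ∫ z in Rect x x₀, g z) * (φ x * g x)

/-! Put `G = ∫_{Rect(x₀,y)} g` and `b = exp(-s G)`. For `0 ≤ α ≤ 1` and `t ≥ 0` one has
`t^α ≤ b^α + b^(α-1) t` (compare `t` with `b`), so it suffices that
`b^(α-1) c_{1,s,x₀}(y) ≤ c_{α,s,x₀}(y)`. This holds pointwise for the integrands: if
`y ∈ Rect(x₀,x)` then `Rect(x₀,y) ⊆ Rect(x,x₀)`, so the exponent `F = ∫_{Rect(x,x₀)} g`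
satisfies `F ≥ G`, whence `(1-α) s G - s F ≤ -α s F`. -/

section Rect

variable {d : ℕ}

theorem Rect_comm (a b : Fin d → ℝ) : Rect a b = Rect b a := by
  ext z
  simp only [Rect, min_comm, max_comm]

theorem Rect_subset_Rect_of_mem {a x y : Fin d → ℝ} (hy : y ∈ Rect a x) :
    Rect a y ⊆ Rect a x := fun _ hz i =>
  ⟨(le_min (min_le_left _ _) (hy i).1).trans (hz i).1,
    (hz i).2.trans (max_le (le_max_left _ _) (hy i).2)⟩

theorem measurableSet_setOf_mem_Rect {β : Type*} [MeasurableSpace β]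
    {f₁ f₂ h : β → Fin d → ℝ} (hf₁ : Measurable f₁) (hf₂ : Measurable f₂) (hh : Measurable h) :
    MeasurableSet {b | h b ∈ Rect (f₁ b) (f₂ b)} := by
  change MeasurableSet {b | ∀ i, _ ∧ _}
  simp only [Set.ofPred_forall, Set.ofPred_and]
  exact MeasurableSet.iInter fun i =>
    (measurableSet_le (by fun_prop) (by fun_prop)).inter
      (measurableSet_le (by fun_prop) (by fun_prop))

theorem measurableSet_Rect (a b : Fin d → ℝ) : MeasurableSet (Rect a b) :=
  measurableSet_setOf_mem_Rect measurable_const measurable_const measurable_id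

theorem measurable_setIntegral_Rect {μ : Measure (Fin d → ℝ)} [SFinite μ]
    {g : (Fin d → ℝ) → ℝ} (hg : AEMeasurable g μ) (b : Fin d → ℝ) :
    Measurable fun x => ∫ z in Rect x b, g z ∂μ := by
  have hmk : (fun x => ∫ z in Rect x b, g z ∂μ) =
      fun x => ∫ z in Rect x b, hg.mk g z ∂μ :=
    funext fun x => integral_congr_ae (ae_restrict_of_ae hg.ae_eq_mk)
  have hprod : Measurable fun p : (Fin d → ℝ) × (Fin d → ℝ) =>
      (Rect p.1 b).indicator (hg.mk g) p.2 :=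
    (hg.measurable_mk.comp measurable_snd).indicator
      (measurableSet_setOf_mem_Rect measurable_fst measurable_const measurable_snd)
  simp_rw [hmk, ← integral_indicator (measurableSet_Rect _ b)]
  exact hprod.stronglyMeasurable.integral_prod_right'.measurable

end Rect

section cfun

variable {d : ℕ} {g φ : (Fin d → ℝ) → ℝ} {x₀ y : Fin d → ℝ} {α s : ℝ}

def cfunIntegrand (g φ : (Fin d → ℝ) → ℝ) (x₀ : Fin d → ℝ) (α s : ℝ) (y x : Fin d → ℝ) : ℝ :=
  (Rect x₀ x).indicator (fun _ => (1 : ℝ)) y * exp (-(α * s) * ∫ z in Rect x x₀, g z) *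
    (φ x * g x)

theorem cfun_eq_mul_integral :
    cfun g φ x₀ α s y = s * ∫ x, cfunIntegrand g φ x₀ α s y x := rfl

theorem cfunIntegrand_nonneg (hg0 : ∀ x, 0 ≤ g x) (hφ0 : ∀ x, 0 ≤ φ x) (x : Fin d → ℝ) :
    0 ≤ cfunIntegrand g φ x₀ α s y x :=
  mul_nonneg (mul_nonneg (Set.indicator_nonneg (fun _ _ => zero_le_one) _) (exp_pos _).le)
    (mul_nonneg (hφ0 x) (hg0 x))

theorem cfun_nonneg (hg0 : ∀ x, 0 ≤ g x) (hφ0 : ∀ x, 0 ≤ φ x) (hs : 0 ≤ s) :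
    0 ≤ cfun g φ x₀ α s y :=
  mul_nonneg hs (integral_nonneg (cfunIntegrand_nonneg hg0 hφ0))

theorem integrable_cfunIntegrand (hg0 : ∀ x, 0 ≤ g x) (hg : AEMeasurable g)
    (hφg : Integrable fun x => φ x * g x) (hαs : 0 ≤ α * s) :
    Integrable (cfunIntegrand g φ x₀ α s y) := by
  refine hφg.bdd_mul (c := 1) ?_ (ae_of_all _ fun x => ?_)
  · have hind : Measurable fun x => (Rect x₀ x).indicator (fun _ => (1 : ℝ)) y :=
      measurable_const.indicator
        (measurableSet_setOf_mem_Rect measurable_const measurable_id measurable_const)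
    exact (hind.mul ((measurable_setIntegral_Rect hg x₀).const_mul _).exp).aestronglyMeasurable
  · have hF : 0 ≤ ∫ z in Rect x x₀, g z :=
      setIntegral_nonneg (measurableSet_Rect x x₀) fun z _ => hg0 z
    rw [norm_mul, norm_of_nonneg (exp_pos _).le]
    refine mul_le_one₀ ((norm_indicator_le_norm_self _ _).trans norm_one.le) (exp_pos _).le ?_
    rw [exp_le_one_iff]
    nlinarith

theorem exp_mul_cfunIntegrand_one_le (hg0 : ∀ x, 0 ≤ g x) (hg : Integrable g)
    (hφ0 : ∀ x, 0 ≤ φ x) (hs : 0 ≤ s) (hα1 : α ≤ 1) (x : Fin d → ℝ) :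
    exp ((1 - α) * s * ∫ z in Rect x₀ y, g z) * cfunIntegrand g φ x₀ 1 s y x ≤
      cfunIntegrand g φ x₀ α s y x := by
  by_cases hy : y ∈ Rect x₀ x
  · have hGF : ∫ z in Rect x₀ y, g z ≤ ∫ z in Rect x x₀, g z := by
      rw [Rect_comm x]
      exact setIntegral_mono_set hg.integrableOn (ae_of_all _ hg0)
        (Rect_subset_Rect_of_mem hy).eventuallyLE
    have hexp : exp ((1 - α) * s * ∫ z in Rect x₀ y, g z) *
        exp (-s * ∫ z in Rect x x₀, g z) ≤ exp (-(α * s) * ∫ z in Rect x x₀, g z) := by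
      rw [← exp_add, exp_le_exp]
      linarith [mul_le_mul_of_nonneg_left hGF (mul_nonneg (sub_nonneg.2 hα1) hs)]
    simp only [cfunIntegrand, Set.indicator_of_mem hy, one_mul]
    rw [← mul_assoc]
    exact mul_le_mul_of_nonneg_right hexp (mul_nonneg (hφ0 x) (hg0 x))
  · simp [cfunIntegrand, hy]

theorem exp_mul_cfun_one_le (hg0 : ∀ x, 0 ≤ g x) (hg : Integrable g) (hφ0 : ∀ x, 0 ≤ φ x)
    (hφg : Integrable fun x => φ x * g x) (hs : 0 ≤ s) (hα : 0 ≤ α) (hα1 : α ≤ 1) :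
    exp ((1 - α) * s * ∫ z in Rect x₀ y, g z) * cfun g φ x₀ 1 s y ≤ cfun g φ x₀ α s y := by
  rw [cfun_eq_mul_integral, cfun_eq_mul_integral, mul_left_comm, ← integral_const_mul]
  refine mul_le_mul_of_nonneg_left
    (integral_mono ?_ ?_ (exp_mul_cfunIntegrand_one_le hg0 hg hφ0 hs hα1)) hs
  · exact (integrable_cfunIntegrand hg0 hg.aemeasurable hφg (by positivity)).const_mul _
  · exact integrable_cfunIntegrand hg0 hg.aemeasurable hφg (mul_nonneg hα hs)

end cfun

theorem rpow_le_rpow_add_rpow_sub_one_mul {α t b : ℝ} (hα : 0 ≤ α) (hα1 : α ≤ 1) (ht : 0 ≤ t)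
    (hb : 0 < b) : t ^ α ≤ b ^ α + b ^ (α - 1) * t := by
  rcases le_total t b with htb | hbt
  · have := mul_nonneg (rpow_nonneg hb.le (α - 1)) ht
    linarith [rpow_le_rpow ht htb hα]
  · have ht0 : 0 < t := hb.trans_le hbt
    calc t ^ α = t ^ (α - 1) * t := by rw [← rpow_add_one ht0.ne', sub_add_cancel]
      _ ≤ b ^ (α - 1) * t :=
        mul_le_mul_of_nonneg_right (rpow_le_rpow_of_nonpos hb hbt (by linarith)) ht
      _ ≤ b ^ α + b ^ (α - 1) * t := le_add_of_nonneg_left (rpow_nonneg hb.le α)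

theorem stmt18_general {d : ℕ}
    (g φ : (Fin d → ℝ) → ℝ)
    (hg0 : ∀ x, 0 ≤ g x)
    (hgprob : ∫ x, g x = 1)
    (hφ0 : ∀ x, 0 ≤ φ x)
    (hφg : Integrable (fun x => φ x * g x))
    (x₀ : Fin d → ℝ)
    (s : ℝ) (hs : 0 < s) (α : ℝ) (hα : 0 < α) (hα1 : α < 1)
    (y : Fin d → ℝ) :
    (cfun g φ x₀ 1 s y) ^ α ≤
      Real.exp (-(α * s) * ∫ z in Rect x₀ y, g z) + cfun g φ x₀ α s y := by
  have hg : Integrable g := .of_integral_ne_zero (hgprob ▸ one_ne_zero)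
  set G := ∫ z in Rect x₀ y, g z
  calc cfun g φ x₀ 1 s y ^ α
      ≤ exp (-(s * G)) ^ α + exp (-(s * G)) ^ (α - 1) * cfun g φ x₀ 1 s y :=
        rpow_le_rpow_add_rpow_sub_one_mul hα.le hα1.le (cfun_nonneg hg0 hφ0 hs.le) (exp_pos _)
    _ = exp (-(α * s) * G) + exp ((1 - α) * s * G) * cfun g φ x₀ 1 s y := by
        simp only [← exp_mul]
        ring_nf
    _ ≤ exp (-(α * s) * G) + cfun g φ x₀ α s y :=
        add_le_add_right (exp_mul_cfun_one_le hg0 hg hφ0 hφg hs.le hα.le hα1.le) _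

theorem stmt18 {d : ℕ}
    (g φ : (Fin d → ℝ) → ℝ)
    (hg0 : ∀ x, 0 ≤ g x) (hgmeas : Measurable g)
    (hgprob : ∫ x, g x = 1)
    (hφ0 : ∀ x, 0 ≤ φ x) (hφmeas : Measurable φ)
    (hφg : Integrable (fun x => φ x * g x))
    (x₀ : Fin d → ℝ)
    (s : ℝ) (hs : 0 < s) (α : ℝ) (hα : 0 < α) (hα1 : α < 1)
    (y : Fin d → ℝ) :
    (cfun g φ x₀ 1 s y) ^ α ≤
      Real.exp (-(α * s) * ∫ z in Rect x₀ y, g z) + cfun g φ x₀ α s y :=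
  stmt18_general g φ hg0 hgprob hφ0 hφg x₀ s hs α hα hα1 y
end
end
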